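/- arXiv:2510.21292 — 6 statements merged into one kernel-verified Lean document; each statement's English description precedes it below -/
import Mathlib

section
/- Let f(x) = step(β₀ + Σᵢ βᵢ·fᵢ(xᵢ)) be an additive classifier on a product domain 𝔽 = X₁ × ⋯ × Xₙ, where step(z) = 1 if z ≥ 0 and 0 otherwise. For each i, define the penalty pᵢ = min over Xᵢ of βᵢ·fᵢ if the pre-activation value of x is nonnegative, and pᵢ = max over Xᵢ of βᵢ·fᵢ otherwise (assume each min/max is attained). Then a subset S ⊆ {1,...,n} is a sufficient reason for (f, x) — i.e., f(x_S; z_{S̄}) = f(x) for all z ∈ 𝔽 — if and only if sign(Σ_{i∈S} βᵢ·fᵢ(xᵢ) + Σ_{j∉S} pⱼ + β₀) · sign(Σᵢ βᵢ·fᵢ(xᵢ) + β₀) ≥ 0, where sign(t) = 1 if t ≥ 0 and -1 otherwise. -/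
/-- Characterization of sufficient reasons for an additive classifier
`f(x) = step(β₀ + Σᵢ βᵢ fᵢ(xᵢ))` with attained component extrema: a subset `S` is a
sufficient reason for `(f, x)` iff
`sign(Σ_{i∈S} βᵢfᵢ(xᵢ) + Σ_{j∉S} pⱼ + β₀) · sign(Σᵢ βᵢfᵢ(xᵢ) + β₀) ≥ 0`,
where `pᵢ` is the attained minimum of `βᵢfᵢ` on `Xᵢ` if the pre-activation of `x`
is nonnegative, and the attained maximum otherwise. -/
theorem stmt2 {n : ℕ} {X : Fin n → Type} [∀ i, Nonempty (X i)]
    (f : ∀ i, X i → ℝ) (β : Fin n → ℝ) (β₀ : ℝ) (x : ∀ i, X i)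
    (p : Fin n → ℝ)
    (hp_pos : 0 ≤ β₀ + ∑ j, β j * f j (x j) →
      ∀ i, (∃ a : X i, β i * f i a = p i) ∧ ∀ a : X i, p i ≤ β i * f i a)
    (hp_neg : β₀ + ∑ j, β j * f j (x j) < 0 →
      ∀ i, (∃ a : X i, β i * f i a = p i) ∧ ∀ a : X i, β i * f i a ≤ p i)
    (S : Finset (Fin n)) :
    (∀ z : ∀ i, X i,
        ((0 ≤ β₀ + ∑ j, β j * f j (if j ∈ S then x j else z j)) ↔
         (0 ≤ β₀ + ∑ j, β j * f j (x j)))) ↔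
      0 ≤ (if 0 ≤ ∑ i ∈ S, β i * f i (x i) + ∑ j ∈ Sᶜ, p j + β₀ then (1:ℝ) else -1) *
          (if 0 ≤ ∑ i, β i * f i (x i) + β₀ then (1:ℝ) else -1) := by
  classical
  set A := ∑ i ∈ S, β i * f i (x i) with hA
  have hsplit : ∀ z : ∀ i, X i,
      (∑ j, β j * f j (if j ∈ S then x j else z j))
        = A + ∑ j ∈ Sᶜ, β j * f j (z j) := by
    intro z
    rw [← Finset.sum_add_sum_compl S]
    congr 1
    · exact Finset.sum_congr rfl fun j hj => by simp [hj]
    · exact Finset.sum_congr rfl fun j hj => by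
        simp [Finset.mem_compl.mp hj]
  have htot : ∑ i, β i * f i (x i) + β₀ = β₀ + ∑ j, β j * f j (x j) := by ring
  by_cases h : 0 ≤ β₀ + ∑ j, β j * f j (x j)
  · have hp := hp_pos h
    rw [if_pos (show (0:ℝ) ≤ ∑ i, β i * f i (x i) + β₀ by linarith), mul_one]
    have zmin : ∀ i, β i * f i ((hp i).1.choose) = p i := fun i => (hp i).1.choose_spec
    constructor
    · intro hs
      rw [if_pos]
      · norm_num
      · have := (hs (fun i => (hp i).1.choose)).mpr h
        rw [hsplit] at this
        have : ∑ j ∈ Sᶜ, β j * f j ((hp j).1.choose) = ∑ j ∈ Sᶜ, p j :=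
          Finset.sum_congr rfl fun j _ => zmin j
        linarith [(hs (fun i => (hp i).1.choose)).mpr h, hsplit (fun i => (hp i).1.choose), this]
    · intro hr z
      have h1 : 0 ≤ A + ∑ j ∈ Sᶜ, p j + β₀ := by
        by_contra hc
        rw [if_neg hc] at hr; norm_num at hr
      have h2 : ∑ j ∈ Sᶜ, p j ≤ ∑ j ∈ Sᶜ, β j * f j (z j) :=
        Finset.sum_le_sum fun j _ => (hp j).2 (z j)
      rw [hsplit]
      constructor <;> intro <;> [exact h; linarith]
  · push_neg at h
    have hp := hp_neg h
    rw [if_neg (show ¬ (0:ℝ) ≤ ∑ i, β i * f i (x i) + β₀ by intro hx; linarith)]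
    have zmax : ∀ i, β i * f i ((hp i).1.choose) = p i := fun i => (hp i).1.choose_spec
    constructor
    · intro hs
      rw [if_neg]
      · norm_num
      · intro hc
        have h2 : ∑ j ∈ Sᶜ, β j * f j ((hp j).1.choose) = ∑ j ∈ Sᶜ, p j :=
          Finset.sum_congr rfl fun j _ => zmax j
        have := (hs (fun i => (hp i).1.choose)).mp
        rw [hsplit, h2] at this
        linarith [this (by linarith)]
    · intro hr z
      have h1 : ¬ (0 ≤ A + ∑ j ∈ Sᶜ, p j + β₀) := by
        intro hc
        rw [if_pos hc] at hr; norm_num at hr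
      push_neg at h1
      have h2 : ∑ j ∈ Sᶜ, β j * f j (z j) ≤ ∑ j ∈ Sᶜ, p j :=
        Finset.sum_le_sum fun j _ => (hp j).2 (z j)
      rw [hsplit]
      constructor <;> intro <;> linarith
end

section
/- With the setting and penalty definitions of the additive classifier above, a subset S ⊆ {1,...,n} is a contrastive reason for (f, x) — i.e., there exists z ∈ 𝔽 with f(x_{S̄}; z_S) ≠ f(x) — if and only if sign(Σ_{i∉S} βᵢ·fᵢ(xᵢ) + Σ_{j∈S} pⱼ + β₀) · sign(Σᵢ βᵢ·fᵢ(xᵢ) + β₀) < 0. -/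
/-- Characterization of contrastive reasons for an additive classifier
`f(x) = step(β₀ + Σᵢ βᵢ fᵢ(xᵢ))` with attained component extrema: a subset `S` is a
contrastive reason for `(f, x)` iff
`sign(Σ_{i∉S} βᵢfᵢ(xᵢ) + Σ_{j∈S} pⱼ + β₀) · sign(Σᵢ βᵢfᵢ(xᵢ) + β₀) < 0`. -/
theorem stmt3 {n : ℕ} {X : Fin n → Type} [∀ i, Nonempty (X i)]
    (f : ∀ i, X i → ℝ) (β : Fin n → ℝ) (β₀ : ℝ) (x : ∀ i, X i)
    (p : Fin n → ℝ)
    (hp_pos : 0 ≤ β₀ + ∑ j, β j * f j (x j) →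
      ∀ i, (∃ a : X i, β i * f i a = p i) ∧ ∀ a : X i, p i ≤ β i * f i a)
    (hp_neg : β₀ + ∑ j, β j * f j (x j) < 0 →
      ∀ i, (∃ a : X i, β i * f i a = p i) ∧ ∀ a : X i, β i * f i a ≤ p i)
    (S : Finset (Fin n)) :
    (∃ z : ∀ i, X i,
        ¬((0 ≤ β₀ + ∑ j, β j * f j (if j ∈ S then z j else x j)) ↔
          (0 ≤ β₀ + ∑ j, β j * f j (x j)))) ↔
      (if 0 ≤ ∑ i ∈ Sᶜ, β i * f i (x i) + ∑ j ∈ S, p j + β₀ then (1:ℝ) else -1) *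
      (if 0 ≤ ∑ i, β i * f i (x i) + β₀ then (1:ℝ) else -1) < 0 := by
  classical
  set A := β₀ + ∑ j, β j * f j (x j) with hA
  have hsplit : ∀ z : ∀ i, X i,
      β₀ + ∑ j, β j * f j (if j ∈ S then z j else x j)
        = ∑ i ∈ Sᶜ, β i * f i (x i) + ∑ j ∈ S, β j * f j (z j) + β₀ := by
    intro z
    rw [← Finset.sum_add_sum_compl S (fun j => β j * f j (if j ∈ S then z j else x j))]
    have h1 : ∑ j ∈ S, β j * f j (if j ∈ S then z j else x j) = ∑ j ∈ S, β j * f j (z j) :=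
      Finset.sum_congr rfl (fun j hj => by simp [hj])
    have h2 : ∑ j ∈ Sᶜ, β j * f j (if j ∈ S then z j else x j) = ∑ j ∈ Sᶜ, β j * f j (x j) := by
      refine Finset.sum_congr rfl (fun j hj => ?_)
      have : j ∉ S := Finset.mem_compl.mp hj
      simp [this]
    rw [h1, h2]; ring
  have hAx : ∑ i, β i * f i (x i) + β₀ = A := by rw [hA]; ring
  by_cases hA0 : 0 ≤ A
  · have hp := hp_pos hA0
    constructor
    · rintro ⟨z, hz⟩
      rw [hsplit z] at hz
      have hBneg : ∑ i ∈ Sᶜ, β i * f i (x i) + ∑ j ∈ S, β j * f j (z j) + β₀ < 0 := by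
        by_contra h; push_neg at h; exact hz ⟨fun _ => hA0, fun _ => h⟩
      have hle : ∑ j ∈ S, p j ≤ ∑ j ∈ S, β j * f j (z j) :=
        Finset.sum_le_sum (fun j _ => (hp j).2 (z j))
      have hneg : ∑ i ∈ Sᶜ, β i * f i (x i) + ∑ j ∈ S, p j + β₀ < 0 := by linarith
      rw [hAx, if_neg (not_le.mpr hneg), if_pos hA0]
      norm_num
    · intro hlt
      rw [hAx, if_pos hA0] at hlt
      have hneg : ∑ i ∈ Sᶜ, β i * f i (x i) + ∑ j ∈ S, p j + β₀ < 0 := by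
        by_contra h; push_neg at h; rw [if_pos h] at hlt; norm_num at hlt
      refine ⟨fun i => (hp i).1.choose, ?_⟩
      rw [hsplit]
      have hsum : ∑ j ∈ S, β j * f j ((hp j).1.choose) = ∑ j ∈ S, p j :=
        Finset.sum_congr rfl (fun j _ => (hp j).1.choose_spec)
      rw [hsum]
      intro hiff
      have := hiff.mpr hA0
      linarith
  · push_neg at hA0
    have hp := hp_neg hA0
    constructor
    · rintro ⟨z, hz⟩
      rw [hsplit z] at hz
      have hBpos : 0 ≤ ∑ i ∈ Sᶜ, β i * f i (x i) + ∑ j ∈ S, β j * f j (z j) + β₀ := by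
        by_contra h; push_neg at h
        exact hz (iff_of_false (not_le.mpr h) (not_le.mpr hA0))
      have hle : ∑ j ∈ S, β j * f j (z j) ≤ ∑ j ∈ S, p j :=
        Finset.sum_le_sum (fun j _ => (hp j).2 (z j))
      have hpos : 0 ≤ ∑ i ∈ Sᶜ, β i * f i (x i) + ∑ j ∈ S, p j + β₀ := by linarith
      rw [hAx, if_pos hpos, if_neg (not_le.mpr hA0)]
      norm_num
    · intro hlt
      rw [hAx, if_neg (not_le.mpr hA0)] at hlt
      have hpos : 0 ≤ ∑ i ∈ Sᶜ, β i * f i (x i) + ∑ j ∈ S, p j + β₀ := by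
        by_contra h; push_neg at h; rw [if_neg (not_le.mpr h)] at hlt; norm_num at hlt
      refine ⟨fun i => (hp i).1.choose, ?_⟩
      rw [hsplit]
      have hsum : ∑ j ∈ S, β j * f j ((hp j).1.choose) = ∑ j ∈ S, p j :=
        Finset.sum_congr rfl (fun j _ => (hp j).1.choose_spec)
      rw [hsum]
      intro hiff
      exact absurd (hiff.mp hpos) (not_le.mpr hA0)
end

section
/- Let f(x) = step(β₀ + Σᵢ βᵢ·fᵢ(xᵢ)) be an additive classifier on 𝔽 = X₁ × ⋯ × Xₙ. Suppose the pre-activation of x is nonnegative (i.e., f(x) = 1), each βᵢ·fᵢ attains its minimum pᵢ on Xᵢ, and define vᵢ = βᵢ·fᵢ(xᵢ) − pᵢ ≥ 0. If S is the set of indices of the k largest values of vᵢ (ties broken arbitrarily) and S is a sufficient reason for (f,x), then every subset S'' of cardinality ≥ k that contains indices achieving at least as large a total Σ_{i∈S''} vᵢ is also a sufficient reason; in particular, the maximizer of Σ_{i∈S} vᵢ over subsets of size k is sufficient whenever any subset of size k is sufficient. -/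
lemma sum_ite_split {n : ℕ} (T : Finset (Fin n)) (g q : Fin n → ℝ) :
    ∑ j, (if j ∈ T then g j else q j) = ∑ j, q j + ∑ j ∈ T, (g j - q j) := by
  rw [Finset.sum_sub_distrib]
  have h1 : ∑ j, (if j ∈ T then g j else q j)
      = ∑ j ∈ T, g j + ∑ j ∈ Tᶜ, q j := by
    rw [Finset.sum_ite, Finset.filter_not]
    simp [Finset.compl_eq_univ_sdiff]
  have h2 : ∑ j, q j = ∑ j ∈ T, q j + ∑ j ∈ Tᶜ, q j := by
    rw [add_comm, Finset.sum_compl_add_sum]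
  rw [h1, h2]; ring

/-- Exchange/monotonicity property for sufficient reasons of an additive classifier with
`f(x) = 1`: if `S` consists of indices of the `k` largest values `vᵢ = βᵢfᵢ(xᵢ) - pᵢ` and
`S` is sufficient, then any subset `S''` of cardinality `≥ k` whose total `Σ_{i∈S''} vᵢ`
is at least `Σ_{i∈S} vᵢ` is also sufficient. -/
theorem stmt7 {n : ℕ} {X : Fin n → Type} [∀ i, Nonempty (X i)]
    (f : ∀ i, X i → ℝ) (β : Fin n → ℝ) (β₀ : ℝ) (x : ∀ i, X i)
    (hx : 0 ≤ β₀ + ∑ j, β j * f j (x j))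
    (p : Fin n → ℝ)
    (hp : ∀ i, (∃ a : X i, β i * f i a = p i) ∧ ∀ a : X i, p i ≤ β i * f i a)
    (k : ℕ) (S S'' : Finset (Fin n))
    (hScard : S.card = k)
    (hStop : ∀ T : Finset (Fin n), T.card = k →
      ∑ i ∈ T, (β i * f i (x i) - p i) ≤ ∑ i ∈ S, (β i * f i (x i) - p i))
    (hSsuff : ∀ z : ∀ i, X i,
      0 ≤ β₀ + ∑ j, β j * f j (if j ∈ S then x j else z j))
    (hcard : k ≤ S''.card)
    (hsum : ∑ i ∈ S, (β i * f i (x i) - p i) ≤ ∑ i ∈ S'', (β i * f i (x i) - p i)) :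
    ∀ z : ∀ i, X i, 0 ≤ β₀ + ∑ j, β j * f j (if j ∈ S'' then x j else z j) := by
  intro z
  set g : Fin n → ℝ := fun j => β j * f j (x j) with hg
  -- minimizer point
  choose zstar hzstar using fun i => (hp i).1
  -- from hSsuff at zstar
  have hS0 : 0 ≤ β₀ + (∑ j, p j + ∑ j ∈ S, (g j - p j)) := by
    have := hSsuff zstar
    have e : ∑ j, β j * f j (if j ∈ S then x j else zstar j)
        = ∑ j, (if j ∈ S then g j else p j) := by
      apply Finset.sum_congr rfl
      intro j _
      by_cases h : j ∈ S <;> simp [h, hzstar j, hg]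
    rw [e, sum_ite_split] at this
    exact this
  have key : β₀ + (∑ j, p j + ∑ j ∈ S'', (g j - p j))
      ≤ β₀ + ∑ j, β j * f j (if j ∈ S'' then x j else z j) := by
    have e : ∑ j, β j * f j (if j ∈ S'' then x j else z j)
        ≥ ∑ j, (if j ∈ S'' then g j else p j) := by
      apply Finset.sum_le_sum
      intro j _
      by_cases h : j ∈ S'' <;> simp [h, hg, (hp j).2]
    rw [sum_ite_split] at e
    linarith
  have mono : β₀ + (∑ j, p j + ∑ j ∈ S, (g j - p j))
      ≤ β₀ + (∑ j, p j + ∑ j ∈ S'', (g j - p j)) := by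
    simp only [hg] at hsum ⊢
    linarith
  linarith
end

section
/- Let f(x) = step(β₀ + Σᵢ βᵢ·fᵢ(xᵢ)) on a product domain with attained component extrema, and suppose f(x) = 1. If S, S' ⊆ [n] with Σ_{i∈S} (βᵢfᵢ(xᵢ) − pᵢ) ≤ Σ_{i∈S'} (βᵢfᵢ(xᵢ) − pᵢ) and S' is not a contrastive reason for (f,x), then S is not a contrastive reason for (f,x). -/
/-- Monotonicity of non-contrastiveness in `Σ_{i∈S} (βᵢfᵢ(xᵢ) - pᵢ)` for an additive
classifier with `f(x) = 1`: if `Σ_{i∈S} vᵢ ≤ Σ_{i∈S'} vᵢ` and `S'` is not contrastive,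
then `S` is not contrastive. -/
theorem stmt8 {n : ℕ} {X : Fin n → Type} [∀ i, Nonempty (X i)]
    (f : ∀ i, X i → ℝ) (β : Fin n → ℝ) (β₀ : ℝ) (x : ∀ i, X i)
    (hx : 0 ≤ β₀ + ∑ j, β j * f j (x j))
    (p : Fin n → ℝ)
    (hp : ∀ i, (∃ a : X i, β i * f i a = p i) ∧ ∀ a : X i, p i ≤ β i * f i a)
    (S S' : Finset (Fin n))
    (hsum : ∑ i ∈ S, (β i * f i (x i) - p i) ≤ ∑ i ∈ S', (β i * f i (x i) - p i))
    (hS' : ¬ ∃ z : ∀ i, X i, β₀ + ∑ j, β j * f j (if j ∈ S' then z j else x j) < 0) :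
    ¬ ∃ z : ∀ i, X i, β₀ + ∑ j, β j * f j (if j ∈ S then z j else x j) < 0 := by
  -- minimizer z₀
  choose z₀ hz₀ using fun i => (hp i).1
  -- key identity: for any T, ∑ j, (if j ∈ T then p j else β j * f j (x j))
  --   = (∑ j, β j * f j (x j)) - ∑ j ∈ T, (β j * f j (x j) - p j)
  have key : ∀ T : Finset (Fin n),
      ∑ j, (if j ∈ T then p j else β j * f j (x j))
        = (∑ j, β j * f j (x j)) - ∑ j ∈ T, (β j * f j (x j) - p j) := by
    intro T
    have : ∀ j, (if j ∈ T then p j else β j * f j (x j))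
        = β j * f j (x j) - (if j ∈ T then β j * f j (x j) - p j else 0) := by
      intro j; by_cases h : j ∈ T <;> simp [h]
    rw [Finset.sum_congr rfl fun j _ => this j, Finset.sum_sub_distrib,
      Finset.sum_ite_mem, Finset.univ_inter]
  -- from hS' with z₀ : 0 ≤ β₀ + ∑ ite (S') p (βf x)
  push_neg at hS'
  have h1 : 0 ≤ β₀ + ∑ j, (if j ∈ S' then p j else β j * f j (x j)) := by
    have := hS' z₀
    have e : ∑ j, β j * f j (if j ∈ S' then z₀ j else x j)
        = ∑ j, (if j ∈ S' then p j else β j * f j (x j)) := by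
      refine Finset.sum_congr rfl fun j _ => ?_
      by_cases h : j ∈ S' <;> simp [h, hz₀]
    linarith [this, e ▸ this]
  have h2 : 0 ≤ β₀ + ∑ j, (if j ∈ S then p j else β j * f j (x j)) := by
    rw [key] at h1 ⊢; linarith
  rintro ⟨z, hz⟩
  have hle : ∑ j, (if j ∈ S then p j else β j * f j (x j))
      ≤ ∑ j, β j * f j (if j ∈ S then z j else x j) := by
    refine Finset.sum_le_sum fun j _ => ?_
    by_cases h : j ∈ S <;> simp [h, (hp j).2]
  linarith
end

section
/- Every 3-DNF formula φ = t₁ ∨ ⋯ ∨ t_m over variables X₁,...,Xₙ can be simulated by a single-input additive tree-ensemble classifier: define on the integer domain {0,...,2ⁿ−1} the function F(x) = step(−1 + Σ_{i=1}^{m} Tᵢ(x)) where Tᵢ(x) ∈ {0,1} checks, via the bits of x, that all three literals of term tᵢ are satisfied (bit j of x is 1 iff Xⱼ is true). Then for every assignment a ∈ {0,1}ⁿ with integer encoding x_a, F(x_a) = 1 if and only if φ(a) is true. Consequently, φ is a tautology if and only if F(x) = 1 for all x ∈ {0,...,2ⁿ−1}. -/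
/-- A 3-DNF term: three literals, each a variable index with a polarity. -/
abbrev Term3 (n : ℕ) := (Fin n × Bool) × (Fin n × Bool) × (Fin n × Bool)

/-- Satisfaction of a term by a Boolean assignment. -/
def termSat {n : ℕ} (a : Fin n → Bool) (t : Term3 n) : Prop :=
  a t.1.1 = t.1.2 ∧ a t.2.1.1 = t.2.1.2 ∧ a t.2.2.1 = t.2.2.2

/-- Satisfaction of a term by the bits of an integer `x` (bit `j` of `x` is `1` iff
variable `Xⱼ` is true). -/
def termSatBits {n : ℕ} (x : ℕ) (t : Term3 n) : Prop :=
  x.testBit t.1.1 = t.1.2 ∧ x.testBit t.2.1.1 = t.2.1.2 ∧ x.testBit t.2.2.1 = t.2.2.2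

instance {n : ℕ} (x : ℕ) (t : Term3 n) : Decidable (termSatBits x t) := by
  unfold termSatBits; infer_instance

/-- The single-input additive tree-ensemble classifier
`F(x) = step(-1 + Σᵢ Tᵢ(x))`, where `Tᵢ(x) ∈ {0,1}` checks via the bits of `x`
that all three literals of term `tᵢ` are satisfied. -/
def Fcl {n m : ℕ} (t : Fin m → Term3 n) (x : ℕ) : ℕ :=
  if (0 : ℤ) ≤ -1 + ∑ i, (if termSatBits x (t i) then (1 : ℤ) else 0) then 1 else 0

/-- Integer encoding of a Boolean assignment: bit `j` of `enc a` is `a j`. -/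
def enc {n : ℕ} (a : Fin n → Bool) : ℕ :=
  ∑ j : Fin n, if a j then 2 ^ (j : ℕ) else 0

lemma enc_succ {n : ℕ} (a : Fin (n+1) → Bool) :
    (∑ j : Fin (n+1), if a j then 2 ^ (j : ℕ) else 0) =
    (if a 0 then 1 else 0) + 2 * ∑ j : Fin n, if a j.succ then 2 ^ (j : ℕ) else 0 := by
  rw [Fin.sum_univ_succ, Finset.mul_sum]
  simp [pow_succ, mul_comm]

lemma testBit_enc {n : ℕ} (a : Fin n → Bool) (j : Fin n) :
    Nat.testBit (∑ j : Fin n, if a j then 2 ^ (j : ℕ) else 0) j = a j := by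
  induction n with
  | zero => exact j.elim0
  | succ n ih =>
    rw [enc_succ]
    cases j using Fin.cases with
    | zero =>
      simp only [Fin.val_zero, Nat.testBit_zero]
      rcases Bool.eq_false_or_eq_true (a 0) with h | h <;> simp [h, Nat.add_mul_mod_self_left]
    | succ j =>
      have : ((if a 0 then 1 else 0) + 2 * ∑ k : Fin n, if a k.succ then 2 ^ (k : ℕ) else 0) / 2
          = ∑ k : Fin n, if a k.succ then 2 ^ (k : ℕ) else 0 := by
        rcases Bool.eq_false_or_eq_true (a 0) with h | h <;>
          simp [h, Nat.add_mul_div_left, Nat.mul_div_cancel_left]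
      simp only [Fin.val_succ, Nat.testBit_succ, this]
      exact ih (fun k => a k.succ) j

lemma sum_range_two_pow_lt (n : ℕ) : (∑ x ∈ Finset.range n, 2 ^ x) < 2 ^ n := by
  induction n with
  | zero => simp
  | succ n ih => rw [Finset.sum_range_succ, pow_succ]; have := Nat.one_le_two_pow (n := n); omega

lemma enc_lt {n : ℕ} (a : Fin n → Bool) :
    (∑ j : Fin n, if a j then 2 ^ (j : ℕ) else 0) < 2 ^ n := by
  calc (∑ j : Fin n, if a j then 2 ^ (j : ℕ) else 0) ≤ ∑ j : Fin n, 2 ^ (j : ℕ) := by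
        apply Finset.sum_le_sum; intro j _; split <;> simp
    _ < 2 ^ n := by
        rw [Fin.sum_univ_eq_sum_range]
        exact sum_range_two_pow_lt n

lemma Fcl_eq_one {n m : ℕ} (t : Fin m → Term3 n) (x : ℕ) :
    Fcl t x = 1 ↔ ∃ i, termSatBits x (t i) := by
  unfold Fcl
  constructor
  · intro h
    by_contra hc
    push_neg at hc
    have : (∑ i, (if termSatBits x (t i) then (1 : ℤ) else 0)) = 0 := by
      apply Finset.sum_eq_zero; intro i _; simp [hc i]
    rw [this] at h
    simp at h
  · rintro ⟨i, hi⟩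
    have h1 : (1 : ℤ) ≤ ∑ i, (if termSatBits x (t i) then (1 : ℤ) else 0) := by
      calc (1 : ℤ) = (if termSatBits x (t i) then (1 : ℤ) else 0) := by simp [hi]
        _ ≤ _ := Finset.single_le_sum (f := fun i => (if termSatBits x (t i) then (1 : ℤ) else 0))
            (fun j _ => by positivity) (Finset.mem_univ i)
    rw [if_pos (by linarith)]

/-- Every 3-DNF `φ = t₁ ∨ ⋯ ∨ t_m` is simulated by the classifier `F`: for every
assignment `a`, `F(enc a) = 1` iff `φ(a)` holds; consequently `φ` is a tautology iff
`F(x) = 1` for all `x ∈ {0,...,2ⁿ-1}`. -/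
theorem stmt14 {n m : ℕ} (t : Fin m → Term3 n) :
    (∀ a : Fin n → Bool, Fcl t (enc a) = 1 ↔ ∃ i, termSat a (t i)) ∧
    ((∀ a : Fin n → Bool, ∃ i, termSat a (t i)) ↔
      ∀ x < 2 ^ n, Fcl t x = 1) := by
  have key : ∀ a : Fin n → Bool, Fcl t (enc a) = 1 ↔ ∃ i, termSat a (t i) := by
    intro a
    rw [Fcl_eq_one]
    have hb : ∀ i, termSatBits (enc a) (t i) ↔ termSat a (t i) := by
      intro i
      unfold termSatBits termSat enc
      rw [testBit_enc, testBit_enc, testBit_enc]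
    exact exists_congr hb
  refine ⟨key, ?_, ?_⟩
  · intro h x hx
    rw [Fcl_eq_one]
    obtain ⟨i, hi⟩ := h (fun j => x.testBit j)
    exact ⟨i, hi.1, hi.2.1, hi.2.2⟩
  · intro h a
    rw [← key a]
    exact h (enc a) (enc_lt a)
end

section
/- Let f(x) = step(β₀ + Σᵢ βᵢfᵢ(xᵢ)) with f(x) = 1 and attained minima pᵢ = min βᵢfᵢ over Xᵢ; set vᵢ = βᵢfᵢ(xᵢ) − pᵢ. Sort features so that v_{σ(1)} ≥ v_{σ(2)} ≥ ⋯ ≥ v_{σ(n)}, and let k* be the smallest k such that Σ_{j≤k} v_{σ(j)} ≥ −(β₀ + Σᵢ pᵢ) (i.e., such that S_k = {σ(1),...,σ(k)} is sufficient). Then S_{k*} is a cardinality-minimal sufficient reason: no subset of size < k* is sufficient for (f, x). -/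
lemma fin_strictMono_le {m n : ℕ} {g : Fin m → Fin n} (hg : StrictMono g) :
    ∀ i : Fin m, (i : ℕ) ≤ (g i : ℕ) := by
  suffices h : ∀ (q : ℕ) (hq : q < m), q ≤ (g ⟨q, hq⟩ : ℕ) by
    exact fun i => h i.1 i.2
  intro q
  induction q with
  | zero => intro _; exact Nat.zero_le _
  | succ q ih =>
    intro hq
    have hq' : q < m := Nat.lt_of_succ_lt hq
    have h2 : g ⟨q, hq'⟩ < g ⟨q + 1, hq⟩ := hg (by simp [Fin.lt_def])
    have h3 := ih hq'
    have h4 : (g ⟨q, hq'⟩ : ℕ) < (g ⟨q + 1, hq⟩ : ℕ) := h2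
    omega

/-- Sum of an antitone function over any `m`-element finset is at most the sum over the
first `m` indices. -/
lemma sum_le_sum_prefix {n : ℕ} (w : Fin n → ℝ)
    (hw : ∀ i j : Fin n, i ≤ j → w j ≤ w i)
    (A : Finset (Fin n)) {m : ℕ} (hA : A.card = m) (hmn : m ≤ n) :
    ∑ j ∈ A, w j ≤ ∑ j ∈ Finset.univ.filter (fun j : Fin n => (j : ℕ) < m), w j := by
  have hemb := A.orderEmbOfFin hA
  have hAeq : A = Finset.image (A.orderEmbOfFin hA) Finset.univ := by
    ext j
    simp only [Finset.mem_image, Finset.mem_univ, true_and]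
    constructor
    · intro hj
      have : j ∈ Set.range (A.orderEmbOfFin hA) := by
        rw [Finset.range_orderEmbOfFin]; exact hj
      exact this
    · rintro ⟨i, rfl⟩
      exact A.orderEmbOfFin_mem hA i
  have hBeq : Finset.univ.filter (fun j : Fin n => (j : ℕ) < m)
      = Finset.image (Fin.castLE hmn) Finset.univ := by
    ext j
    simp only [Finset.mem_filter, Finset.mem_univ, true_and, Finset.mem_image]
    constructor
    · intro hj; exact ⟨⟨j, hj⟩, rfl⟩
    · rintro ⟨i, rfl⟩; simpa using i.2
  rw [hAeq, hBeq, Finset.sum_image (fun a _ b _ h => (A.orderEmbOfFin hA).injective h),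
    Finset.sum_image (fun a _ b _ h => Fin.castLE_injective hmn h)]
  apply Finset.sum_le_sum
  intro i _
  apply hw
  have := fin_strictMono_le (A.orderEmbOfFin hA).strictMono i
  exact Fin.le_def.mpr (by simpa using this)

/-- Correctness of the greedy algorithm for minimum sufficient reasons of an additive
classifier with `f(x) = 1`: sort features so that `v_{σ(1)} ≥ ⋯ ≥ v_{σ(n)}` where
`vᵢ = βᵢfᵢ(xᵢ) - pᵢ` and `pᵢ` is the attained minimum of `βᵢfᵢ`; if `k` is the smallest
index with `Σ_{j≤k} v_{σ(j)} ≥ -(β₀ + Σᵢ pᵢ)`, then the top-`k` prefix is a sufficient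
reason and no subset of cardinality `< k` is sufficient. -/
theorem stmt16 {n : ℕ} {X : Fin n → Type} [∀ i, Nonempty (X i)]
    (f : ∀ i, X i → ℝ) (β : Fin n → ℝ) (β₀ : ℝ) (x : ∀ i, X i)
    (hx : 0 ≤ β₀ + ∑ j, β j * f j (x j))
    (p : Fin n → ℝ)
    (hp : ∀ i, (∃ a : X i, β i * f i a = p i) ∧ ∀ a : X i, p i ≤ β i * f i a)
    (σ : Equiv.Perm (Fin n))
    (hsort : ∀ i j : Fin n, i ≤ j →
      β (σ j) * f (σ j) (x (σ j)) - p (σ j) ≤ β (σ i) * f (σ i) (x (σ i)) - p (σ i))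
    (k : ℕ) (hk : k ≤ n)
    (hsuffk : -(β₀ + ∑ i, p i) ≤
      ∑ i ∈ (Finset.univ.filter fun j : Fin n => (j : ℕ) < k).image σ,
        (β i * f i (x i) - p i))
    (hmin : ∀ k' < k,
      ∑ i ∈ (Finset.univ.filter fun j : Fin n => (j : ℕ) < k').image σ,
        (β i * f i (x i) - p i) < -(β₀ + ∑ i, p i)) :
    (∀ z : ∀ i, X i, 0 ≤ β₀ + ∑ j, β j * f j
        (if j ∈ (Finset.univ.filter fun j : Fin n => (j : ℕ) < k).image σ
         then x j else z j)) ∧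
    ∀ T : Finset (Fin n), T.card < k →
      ∃ z : ∀ i, X i, β₀ + ∑ j, β j * f j (if j ∈ T then x j else z j) < 0 := by
  set v : Fin n → ℝ := fun i => β i * f i (x i) - p i with hv
  -- generic split of the "masked" sum
  have split : ∀ (S : Finset (Fin n)),
      ∑ j, (if j ∈ S then β j * f j (x j) else p j) = (∑ j, p j) + ∑ j ∈ S, v j := by
    intro S
    have : ∀ j : Fin n, (if j ∈ S then β j * f j (x j) else p j)
        = p j + (if j ∈ S then v j else 0) := by
      intro j; split <;> simp [hv]
    rw [Finset.sum_congr rfl (fun j _ => this j), Finset.sum_add_distrib]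
    congr 1
    rw [Finset.sum_ite_mem, Finset.univ_inter]
  constructor
  · intro z
    set S := (Finset.univ.filter fun j : Fin n => (j : ℕ) < k).image σ with hS
    have hle : ∑ j, (if j ∈ S then β j * f j (x j) else p j)
        ≤ ∑ j, β j * f j (if j ∈ S then x j else z j) := by
      apply Finset.sum_le_sum
      intro j _
      split
      · exact le_refl _
      · exact (hp j).2 _
    have := split S
    rw [this] at hle
    have hsk : -(β₀ + ∑ i, p i) ≤ ∑ j ∈ S, v j := hsuffk
    linarith
  · intro T hT
    choose z hz using fun i => (hp i).1
    refine ⟨z, ?_⟩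
    have hsum : ∑ j, β j * f j (if j ∈ T then x j else z j)
        = ∑ j, (if j ∈ T then β j * f j (x j) else p j) := by
      apply Finset.sum_congr rfl
      intro j _
      split
      · rfl
      · exact hz j
    rw [hsum, split T]
    -- reduce to sum over T of v
    set m := T.card with hm
    have hmn : m ≤ n := le_trans (le_of_lt hT) hk
    -- pull back T along σ
    set A : Finset (Fin n) := T.image σ.symm with hA
    have hcard : A.card = m := Finset.card_image_of_injective _ σ.symm.injective
    have hTeq : T = A.image σ := by
      simp [hA, Finset.image_image]
    have hsumT : ∑ j ∈ T, v j = ∑ j ∈ A, v (σ j) := by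
      rw [hTeq, Finset.sum_image (fun a _ b _ h => σ.injective h)]
    have hdom : ∑ j ∈ A, v (σ j)
        ≤ ∑ j ∈ Finset.univ.filter (fun j : Fin n => (j : ℕ) < m), v (σ j) :=
      sum_le_sum_prefix (fun j => v (σ j)) (fun i j hij => hsort i j hij) A hcard hmn
    have hpref : ∑ j ∈ Finset.univ.filter (fun j : Fin n => (j : ℕ) < m), v (σ j)
        = ∑ i ∈ (Finset.univ.filter fun j : Fin n => (j : ℕ) < m).image σ, v i := by
      rw [Finset.sum_image (fun a _ b _ h => σ.injective h)]
    have hlt := hmin m hT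
    have : ∑ j ∈ T, v j < -(β₀ + ∑ i, p i) := by
      rw [hsumT]
      calc ∑ j ∈ A, v (σ j) ≤ _ := hdom
        _ = _ := hpref
        _ < _ := hlt
    linarith
end
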